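/- Let d ≥ 2 and let q ≡ 1 (mod d) be a prime power. Let λ ∈ F_q^* and let A ⊆ F_q^* be a set such that for all distinct a, b ∈ A, the element ab + λ is either 0 or a d-th power in F_q^*. Then |A| ≤ √(q − 11/4) + 5/2. -/

import Mathlib

/-!
Fix a nontrivial character `χ` of `F_q^*` with `χ^d = 1`, which exists since `d ∣ q - 1`, and put
`u(a) = ∑_{b ∈ A} χ(ab + λ)`. For `a ∈ A` every term of `u(a)` equals `1` except the ones at
`b = a` and `b = -λ/a`, so `Re u(a) ≥ |A| - 3`. On the other hand, orthogonality of `χ` via the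
Jacobi sum `J(χ, χ⁻¹) = -χ(-1)` gives `∑_{a ∈ F} |u(a)|² ≤ |A| q`, and `|u(0)| = |A|`. Hence
`|A| (|A| - 3)² ≤ |A| q - |A|²`, i.e. `(|A| - 5/2)² ≤ q - 11/4`.
-/

open Finset

namespace MulChar

section Norm

variable {R K : Type*} [CommMonoid R] [Finite Rˣ] [NormedField K] (χ : MulChar R K)

lemma norm_apply_eq_one {a : R} (ha : IsUnit a) : ‖χ a‖ = 1 := by
  obtain ⟨u, rfl⟩ := ha
  refine (pow_eq_one_iff_of_nonneg (norm_nonneg _) (Nat.card_pos (α := Rˣ)).ne').mp ?_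
  rw [← norm_pow, ← map_pow, ← Units.val_pow_eq_pow_val, pow_card_eq_one', Units.val_one,
    map_one, norm_one]

lemma norm_apply_le_one (a : R) : ‖χ a‖ ≤ 1 := by
  by_cases ha : IsUnit a
  · exact (χ.norm_apply_eq_one ha).le
  · rw [χ.map_nonunit ha, norm_zero]
    exact zero_le_one

end Norm

lemma apply_pow_eq_one_of_pow_eq_one {R R' : Type*} [CommMonoid R] [CommMonoidWithZero R']
    {χ : MulChar R R'} {d : ℕ} (hχ : χ ^ d = 1) {a : R} (ha : IsUnit a) : χ (a ^ d) = 1 := by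
  obtain ⟨u, rfl⟩ := ha
  rw [map_pow, ← pow_apply_coe, hχ, one_apply_coe]

lemma exists_ne_one_pow_eq_one (F : Type*) [Field F] [Fintype F] {d : ℕ} (hd : 2 ≤ d)
    (hdvd : d ∣ Fintype.card F - 1) : ∃ χ : MulChar F ℂ, χ ≠ 1 ∧ χ ^ d = 1 := by
  obtain ⟨χ, hχ⟩ := exists_mulChar_orderOf F hdvd (Complex.isPrimitiveRoot_exp d (by omega))
  refine ⟨χ, fun h => ?_, hχ ▸ pow_orderOf_eq_one χ⟩
  rw [h, orderOf_one] at hχ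
  omega

section Correlation

variable {F R : Type*} [Field F] [Fintype F] [CommRing R]

lemma sum_apply_mul_add_mul_inv_apply_mul_add_self (χ : MulChar F R) {b : F} (hb : b ≠ 0)
    (c : F) : ∑ a, χ (a * b + c) * χ⁻¹ (a * b + c) = Fintype.card F - 1 := by
  classical
  rw [Fintype.sum_bijective (fun a => a * b + c)
    ((Equiv.mulRight₀ b hb).trans (Equiv.addRight c)).bijective
    (fun a => χ (a * b + c) * χ⁻¹ (a * b + c)) (fun y => (χ * χ⁻¹) y)
    (fun _ => rfl), mul_inv_cancel, sum_one_eq_card_units, Fintype.card_units,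
    Nat.cast_sub Fintype.card_pos, Nat.cast_one]

variable [IsDomain R]

lemma sum_apply_mul_add_mul_inv_apply_mul_add_of_ne {χ : MulChar F R} (hχ : χ ≠ 1)
    {b b' c : F} (hb : b ≠ 0) (hb' : b' ≠ 0) (hbb' : b ≠ b') (hc : c ≠ 0) :
    ∑ a, χ (a * b + c) * χ⁻¹ (a * b' + c) = -(χ b * χ⁻¹ b') := by
  -- With `x = (a * b + c) / α`, `a * b' + c = β (1 - x)` and the sum is `χ α χ⁻¹ β J(χ, χ⁻¹)`.
  set α := c * (b' - b) / b'
  set β := c * (b - b') / b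
  have hα : α ≠ 0 := div_ne_zero (mul_ne_zero hc (sub_ne_zero.mpr hbb'.symm)) hb'
  have hβ : β ≠ 0 := div_ne_zero (mul_ne_zero hc (sub_ne_zero.mpr hbb')) hb
  have key : ∀ a, χ (a * b + c) * χ⁻¹ (a * b' + c)
      = χ α * χ⁻¹ β * (χ ((a * b + c) / α) * χ⁻¹ (1 - (a * b + c) / α)) := by
    intro a
    have h1 : 1 - (a * b + c) / α = (a * b' + c) / β := by
      simp only [α, β]
      field_simp
      ring
    simp only [h1, inv_apply', ← map_mul]
    congr 1
    field_simp
  rw [Fintype.sum_bijective (fun a => (a * b + c) / α)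
    ((Equiv.mulRight₀ b hb).trans ((Equiv.addRight c).trans (Equiv.divRight₀ α hα))).bijective
    _ (fun x => χ α * χ⁻¹ β * (χ x * χ⁻¹ (1 - x))) key, ← mul_sum]
  change χ α * χ⁻¹ β * jacobiSum χ χ⁻¹ = _
  rw [jacobiSum_nontrivial_inv hχ, mul_neg, neg_inj]
  simp only [inv_apply', ← map_mul]
  congr 1
  simp only [α, β]
  field_simp
  ring

lemma sum_apply_mul_add_mul_inv_apply_mul_add [DecidableEq F] {χ : MulChar F R} (hχ : χ ≠ 1)
    {b b' c : F} (hb : b ≠ 0) (hb' : b' ≠ 0) (hc : c ≠ 0) :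
    ∑ a, χ (a * b + c) * χ⁻¹ (a * b' + c)
      = (if b = b' then (Fintype.card F : R) else 0) - χ b * χ⁻¹ b' := by
  rcases eq_or_ne b b' with rfl | hbb'
  · rw [sum_apply_mul_add_mul_inv_apply_mul_add_self χ hb, if_pos rfl, inv_apply', ← map_mul,
      mul_inv_cancel₀ hb, map_one]
  · rw [sum_apply_mul_add_mul_inv_apply_mul_add_of_ne hχ hb hb' hbb' hc, if_neg hbb', zero_sub]

end Correlation

variable {F : Type*} [Field F] [Fintype F]

lemma sum_norm_sq_sum_apply_mul_add {χ : MulChar F ℂ} (hχ : χ ≠ 1) {A : Finset F}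
    (hA0 : (0 : F) ∉ A) {c : F} (hc : c ≠ 0) :
    ∑ a, ‖∑ b ∈ A, χ (a * b + c)‖ ^ 2 = #A * Fintype.card F - ‖∑ b ∈ A, χ b‖ ^ 2 := by
  classical
  have hnorm_sq (z : ℂ) : (‖z‖ : ℂ) ^ 2 = z * (starRingEnd ℂ) z := (Complex.mul_conj' z).symm
  apply Complex.ofReal_injective
  push_cast
  simp only [hnorm_sq, map_sum, ← RCLike.star_def, star_apply', sum_mul_sum]
  rw [sum_comm]
  calc _ = ∑ b ∈ A, ∑ b' ∈ A,
        ((if b = b' then (Fintype.card F : ℂ) else 0) - χ b * χ⁻¹ b') := by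
        refine sum_congr rfl fun b hb => ?_
        rw [sum_comm]
        refine sum_congr rfl fun b' hb' => ?_
        exact sum_apply_mul_add_mul_inv_apply_mul_add hχ (ne_of_mem_of_not_mem hb hA0)
          (ne_of_mem_of_not_mem hb' hA0) hc
    _ = _ := by
        simp only [sum_sub_distrib, sum_ite_eq]
        simp

lemma sum_norm_sq_sum_apply_mul_add_le {χ : MulChar F ℂ} (hχ : χ ≠ 1) {A : Finset F}
    (hA0 : (0 : F) ∉ A) {c : F} (hc : c ≠ 0) :
    ∑ a ∈ A, ‖∑ b ∈ A, χ (a * b + c)‖ ^ 2 ≤ #A * Fintype.card F - #A ^ 2 := by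
  classical
  have hzero : ‖∑ b ∈ A, χ (0 * b + c)‖ = #A := by
    simp [norm_apply_eq_one χ hc.isUnit]
  have hsubset : A ⊆ univ.erase 0 := fun a ha =>
    mem_erase.mpr ⟨ne_of_mem_of_not_mem ha hA0, mem_univ a⟩
  calc ∑ a ∈ A, ‖∑ b ∈ A, χ (a * b + c)‖ ^ 2
      ≤ ∑ a ∈ univ.erase 0, ‖∑ b ∈ A, χ (a * b + c)‖ ^ 2 :=
        sum_le_sum_of_subset_of_nonneg hsubset fun _ _ _ => sq_nonneg _
    _ = ∑ a, ‖∑ b ∈ A, χ (a * b + c)‖ ^ 2 - #A ^ 2 := by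
        rw [← sum_erase_add _ _ (mem_univ 0), hzero, add_sub_cancel_right]
    _ ≤ #A * Fintype.card F - #A ^ 2 := by
        rw [sum_norm_sq_sum_apply_mul_add hχ hA0 hc]
        linarith [sq_nonneg ‖∑ b ∈ A, χ b‖]

end MulChar

open MulChar

section Diophantine

variable {F : Type*} [Field F] [Fintype F]

def IsDiophantineTuple (d : ℕ) (lam : F) (A : Finset F) : Prop :=
  ∀ a ∈ A, ∀ b ∈ A, a ≠ b → a * b + lam = 0 ∨ ∃ x : F, x ≠ 0 ∧ x ^ d = a * b + lam

variable {d : ℕ} {lam : F} {A : Finset F}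

lemma IsDiophantineTuple.card_sub_three_le_re_sum (hA : IsDiophantineTuple d lam A)
    (hA0 : (0 : F) ∉ A) {χ : MulChar F ℂ} (hχ : χ ^ d = 1) {a : F} (ha : a ∈ A) :
    (#A : ℝ) - 3 ≤ (∑ b ∈ A, χ (a * b + lam)).re := by
  classical
  have ha0 : a ≠ 0 := ne_of_mem_of_not_mem ha hA0
  have hterm : ∀ b ∈ A, 1 - (if b = a then 2 else 0) - (if b = -lam / a then 1 else 0)
      ≤ (χ (a * b + lam)).re := by
    intro b hb
    rcases eq_or_ne b a with rfl | hba
    · have hre : -1 ≤ (χ (b * b + lam)).re :=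
        (abs_le.mp ((Complex.abs_re_le_norm _).trans (χ.norm_apply_le_one _))).1
      rw [if_pos rfl]
      split_ifs <;> linarith
    rcases hA a ha b hb (Ne.symm hba) with hzero | ⟨x, hx, hxd⟩
    · have hb' : b = -lam / a := by
        field_simp
        linear_combination hzero
      rw [if_neg hba, if_pos hb', hzero, MulChar.map_zero, Complex.zero_re]
      norm_num
    · rw [← hxd, apply_pow_eq_one_of_pow_eq_one hχ hx.isUnit]
      split_ifs <;> norm_num
  calc (#A : ℝ) - 3
      ≤ ∑ b ∈ A, (1 - (if b = a then 2 else 0) - (if b = -lam / a then 1 else 0)) := by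
        simp only [sum_sub_distrib, sum_ite_eq', if_pos ha, sum_const, nsmul_one]
        split_ifs <;> linarith
    _ ≤ ∑ b ∈ A, (χ (a * b + lam)).re := sum_le_sum hterm
    _ = (∑ b ∈ A, χ (a * b + lam)).re := (Complex.re_sum _ _).symm

end Diophantine

/-- trivial upper bound for Diophantine tuples over finite fields. -/
theorem diophantine_trivial_bound
    (d : ℕ) (hd : 2 ≤ d) (F : Type*) [Field F] [Fintype F]
    (hq : Fintype.card F % d = 1)
    (lam : F) (hlam : lam ≠ 0)
    (A : Finset F) (hA0 : (0 : F) ∉ A)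
    (hprop : ∀ a ∈ A, ∀ b ∈ A, a ≠ b →
      a * b + lam = 0 ∨ ∃ x : F, x ≠ 0 ∧ x ^ d = a * b + lam) :
    (A.card : ℝ) ≤ Real.sqrt ((Fintype.card F : ℝ) - 11 / 4) + 5 / 2 := by
  set q := Fintype.card F
  set n := #A
  rcases le_or_gt n 2 with hn | hn
  · have : (n : ℝ) ≤ 2 := by exact_mod_cast hn
    linarith [Real.sqrt_nonneg ((q : ℝ) - 11 / 4)]
  have hn3 : (3 : ℝ) ≤ n := by exact_mod_cast hn
  obtain ⟨χ, hχ, hχd⟩ := exists_ne_one_pow_eq_one F hd (hq ▸ Nat.dvd_sub_mod q)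
  have hA : IsDiophantineTuple d lam A := hprop
  have hlower : ∀ a ∈ A, ((n : ℝ) - 3) ^ 2 ≤ ‖∑ b ∈ A, χ (a * b + lam)‖ ^ 2 := fun a ha =>
    pow_le_pow_left₀ (by linarith)
      ((hA.card_sub_three_le_re_sum hA0 hχd ha).trans (Complex.re_le_norm _)) 2
  have hsum : n * ((n : ℝ) - 3) ^ 2 ≤ n * (q - n) := by
    have := (sum_le_sum hlower).trans (sum_norm_sq_sum_apply_mul_add_le hχ hA0 hlam)
    rw [sum_const, nsmul_eq_mul] at this
    linarith
  have hsq : ((n : ℝ) - 5 / 2) ^ 2 ≤ q - 11 / 4 := by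
    nlinarith [le_of_mul_le_mul_left hsum (by positivity)]
  linarith [Real.le_sqrt_of_sq_le hsq]
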